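/- Let P be a two-orbit n-polytope in class 2_I with base flag Φ, where N \ I = {j_0, k_0} with k_0 = j_0 + 2. Then the coset intersection Γ_{k_0}^- ∩ Γ_{j_0}^+ α_{j_0,k_0} is empty, and Γ_{k_0}^- ∩ α_{k_0,j_0} Γ_{j_0}^+ α_{j_0,k_0} = ⟨α_{j_0, j_0+1, j_0}⟩, a group of order 2. -/
import Mathlib


/-- An abstract polytope of rank `n`, presented by a partially ordered type of faces
with a strictly monotone rank function onto `{-1, 0, ..., n}`, such that every flag
(maximal chain) has exactly one face of each rank (`faceAt`), every flag has a unique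
`i`-adjacent flag for each `i = 0, ..., n-1` (the diamond condition, via `adj`), and
which is strongly flag-connected. -/
structure AbstractPolytope (n : ℕ) (Face : Type*) [PartialOrder Face] where
  rank : Face → ℤ
  rank_strictMono : ∀ {F G : Face}, F < G → rank F < rank G
  rank_le : ∀ F : Face, -1 ≤ rank F ∧ rank F ≤ (n : ℤ)
  /-- the unique face of rank `i` in the flag `Φ`, for `-1 ≤ i ≤ n` -/
  faceAt : Flag Face → ℤ → Face
  faceAt_mem : ∀ (Φ : Flag Face) (i : ℤ), -1 ≤ i → i ≤ (n : ℤ) → faceAt Φ i ∈ Φ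
  faceAt_rank : ∀ (Φ : Flag Face) (i : ℤ), -1 ≤ i → i ≤ (n : ℤ) → rank (faceAt Φ i) = i
  faceAt_eq : ∀ (Φ : Flag Face) (F : Face), F ∈ Φ → faceAt Φ (rank F) = F
  /-- the unique `i`-adjacent flag of `Φ`, for `0 ≤ i ≤ n-1` -/
  adj : Flag Face → ℕ → Flag Face
  adj_ne : ∀ (Φ : Flag Face) (i : ℕ), i < n → adj Φ i ≠ Φ
  adj_mem : ∀ (Φ : Flag Face) (i : ℕ), i < n →
    ∀ F ∈ Φ, rank F ≠ (i : ℤ) → F ∈ adj Φ i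
  adj_unique : ∀ (Φ Ψ : Flag Face) (i : ℕ), i < n → Ψ ≠ Φ →
    (∀ F ∈ Φ, rank F ≠ (i : ℤ) → F ∈ Ψ) → Ψ = adj Φ i
  /-- strong flag-connectedness: any two flags are joined by a sequence of successively
  adjacent flags, with all adjacencies at ranks not occurring among their common faces -/
  connected : ∀ Φ Ψ : Flag Face, ∃ (l : ℕ) (c : ℕ → Flag Face), c 0 = Φ ∧ c l = Ψ ∧
    ∀ m < l, ∃ i : ℕ, i < n ∧ c (m + 1) = adj (c m) i ∧
      ∀ F : Face, F ∈ Φ → F ∈ Ψ → rank F ≠ (i : ℤ)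

namespace AbstractPolytope

variable {n : ℕ} {Face : Type*} [PartialOrder Face]

/-- The automorphism group `Γ(P)`: order automorphisms of the set of faces.
It acts on flags via `Flag.map`; `g • Φ` denotes the image flag. -/
instance : MulAction (Face ≃o Face) (Flag Face) where
  smul g Φ := Flag.map g Φ
  one_smul Φ := by
    show Flag.map 1 Φ = Φ
    ext x
    simp [Flag.map, Flag.ofIsMaxChain]
  mul_smul g h Φ := by
    show Flag.map (g * h) Φ = Flag.map g (Flag.map h Φ)
    ext x
    simp [Flag.map, Flag.ofIsMaxChain, Set.image_image]

lemma smul_flag_def (g : Face ≃o Face) (Φ : Flag Face) : g • Φ = Flag.map g Φ := rfl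

/-- Two flags lie in the same orbit under the automorphism group. -/
def SameOrbit (Φ Ψ : Flag Face) : Prop := ∃ g : Face ≃o Face, g • Φ = Ψ

/-- The polytope has exactly two orbits on flags. -/
def TwoOrbit (_A : AbstractPolytope n Face) : Prop :=
  ∃ Φ Ψ : Flag Face, ¬ SameOrbit Φ Ψ ∧ ∀ X : Flag Face, SameOrbit X Φ ∨ SameOrbit X Ψ

/-- `I` is the class type set of the two-orbit polytope `A`: it consists precisely of
those ranks `i ∈ {0,...,n-1}` such that every flag and its `i`-adjacent flag lie in the
same orbit; that is, `A` is in the class `2_I`. -/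
def InClass (A : AbstractPolytope n Face) (I : Set ℕ) : Prop :=
  (∀ i ∈ I, i < n) ∧ ∀ i : ℕ, i < n → (i ∈ I ↔ ∀ Φ : Flag Face, SameOrbit Φ (A.adj Φ i))

/-- The stabilizer in the automorphism group of a face `F`. -/
def faceStab (_A : AbstractPolytope n Face) (F : Face) : Subgroup (Face ≃o Face) where
  carrier := {g : Face ≃o Face | g F = F}
  one_mem' := rfl
  mul_mem' := by
    intro a b ha hb
    show (a * b) F = F
    rw [RelIso.mul_apply]
    rw [show b F = F from hb, show a F = F from ha]
  inv_mem' := by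
    intro a ha
    show a⁻¹ F = F
    conv_lhs => rw [← show a F = F from ha]
    exact a.symm_apply_apply F

lemma mem_faceStab {A : AbstractPolytope n Face} {F : Face} {g : Face ≃o Face} :
    g ∈ A.faceStab F ↔ g F = F := Iff.rfl

end AbstractPolytope


namespace AbstractPolytope

variable {n : ℕ} {Face : Type*} [PartialOrder Face]

lemma mem_smul_iff {g : Face ≃o Face} {Ψ : Flag Face} {F : Face} :
    F ∈ g • Ψ ↔ ∃ G ∈ Ψ, g G = F := by
  rw [smul_flag_def, ← SetLike.mem_coe, Flag.coe_map]
  exact Set.mem_image g (↑Ψ) F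

lemma smul_mem_flag {g : Face ≃o Face} {Ψ : Flag Face} {F : Face} (h : F ∈ Ψ) :
    g F ∈ g • Ψ :=
  mem_smul_iff.mpr ⟨F, h, rfl⟩

lemma le_of_rank_le (A : AbstractPolytope n Face) {Ψ : Flag Face} {F F' : Face}
    (hF : F ∈ Ψ) (hF' : F' ∈ Ψ) (h : A.rank F ≤ A.rank F') : F ≤ F' := by
  rcases Ψ.le_or_le hF hF' with h1 | h1
  · exact h1
  · rcases h1.lt_or_eq with h2 | h2
    · exact absurd (A.rank_strictMono h2) (by omega)
    · exact h2.ge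

lemma lt_of_rank_lt (A : AbstractPolytope n Face) {Ψ : Flag Face} {F F' : Face}
    (hF : F ∈ Ψ) (hF' : F' ∈ Ψ) (h : A.rank F < A.rank F') : F < F' := by
  refine lt_of_le_of_ne (le_of_rank_le A hF hF' h.le) ?_
  intro heq; rw [heq] at h; exact lt_irrefl _ h

lemma faceAt_lt (A : AbstractPolytope n Face) (Ψ : Flag Face) {l l' : ℤ}
    (h1 : -1 ≤ l) (h2 : l < l') (h3 : l' ≤ n) :
    A.faceAt Ψ l < A.faceAt Ψ l' :=
  lt_of_rank_lt A (A.faceAt_mem Ψ l h1 (by omega)) (A.faceAt_mem Ψ l' (by omega) h3)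
    (by rw [A.faceAt_rank Ψ l h1 (by omega), A.faceAt_rank Ψ l' (by omega) h3]; exact h2)

private lemma int_mono_ge (a b : ℤ) (u : ℤ → ℤ)
    (hm : ∀ l l', a ≤ l → l < l' → l' ≤ b → u l < u l')
    (hlb : ∀ l, a ≤ l → l ≤ b → a ≤ u l) :
    ∀ l, a ≤ l → l ≤ b → l ≤ u l := by
  have key : ∀ k : ℕ, ∀ l, l = a + k → l ≤ b → l ≤ u l := by
    intro k
    induction k with
    | zero => intro l hl hlb'; have := hlb l (by omega) hlb'; omega
    | succ k ih =>
      intro l hl hlb'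
      have h1 : u (l - 1) < u l := hm (l - 1) l (by omega) (by omega) hlb'
      have h2 := ih (l - 1) (by omega) (by omega)
      omega
  intro l hal hlb'
  exact key (l - a).toNat l (by omega) hlb'

private lemma int_mono_id (a b : ℤ) (u : ℤ → ℤ)
    (hm : ∀ l l', a ≤ l → l < l' → l' ≤ b → u l < u l')
    (hlb : ∀ l, a ≤ l → l ≤ b → a ≤ u l)
    (hub : ∀ l, a ≤ l → l ≤ b → u l ≤ b) :
    ∀ l, a ≤ l → l ≤ b → u l = l := by
  have h1 := int_mono_ge a b u hm hlb
  have h2 := int_mono_ge a b (fun l => a + b - u (a + b - l))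
    (fun l l' hl hll' hl'b => by
      have := hm (a + b - l') (a + b - l) (by omega) (by omega) (by omega)
      show a + b - u (a + b - l) < a + b - u (a + b - l')
      omega)
    (fun l hl hlb' => by
      have := hub (a + b - l) (by omega) (by omega)
      show a ≤ a + b - u (a + b - l)
      omega)
  intro l hla hlb'
  have e1 := h1 l hla hlb'
  have e2 := h2 (a + b - l) (by omega) (by omega)
  simp only [sub_sub_cancel] at e2
  omega

lemma smul_faceAt (A : AbstractPolytope n Face) (g : Face ≃o Face) (Ψ : Flag Face)
    {l : ℤ} (h1 : -1 ≤ l) (h2 : l ≤ n) :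
    g (A.faceAt Ψ l) = A.faceAt (g • Ψ) l ∧ A.rank (g (A.faceAt Ψ l)) = l := by
  have key : ∀ l : ℤ, -1 ≤ l → l ≤ n → A.rank (g (A.faceAt Ψ l)) = l := by
    refine int_mono_id (-1) n (fun l => A.rank (g (A.faceAt Ψ l))) ?_ ?_ ?_
    · intro l l' hl hll' hl'
      exact A.rank_strictMono (g.strictMono (faceAt_lt A Ψ hl hll' hl'))
    · intro l _ _; exact (A.rank_le _).1
    · intro l _ _; exact (A.rank_le _).2
  have hr := key l h1 h2
  refine ⟨?_, hr⟩
  have hmem : g (A.faceAt Ψ l) ∈ g • Ψ := smul_mem_flag (A.faceAt_mem Ψ l h1 h2)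
  have h3 := A.faceAt_eq (g • Ψ) _ hmem
  rw [hr] at h3
  exact h3.symm

lemma exists_mem_flag (F : Face) : ∃ Ψ : Flag Face, F ∈ Ψ := by
  obtain ⟨M, hM, hsub⟩ := (Set.subsingleton_singleton (a := F)).isChain.exists_maxChain
  exact ⟨Flag.ofIsMaxChain M hM, hsub rfl⟩

lemma rank_smul (A : AbstractPolytope n Face) (g : Face ≃o Face) (F : Face) :
    A.rank (g F) = A.rank F := by
  obtain ⟨Ψ, hΨ⟩ := exists_mem_flag F
  have h := A.faceAt_eq Ψ F hΨ
  have h2 := (smul_faceAt A g Ψ (A.rank_le F).1 (A.rank_le F).2).2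
  rw [h] at h2
  exact h2

lemma smul_adj (A : AbstractPolytope n Face) (g : Face ≃o Face) (Ψ : Flag Face)
    {i : ℕ} (hi : i < n) : g • A.adj Ψ i = A.adj (g • Ψ) i := by
  refine A.adj_unique (g • Ψ) (g • A.adj Ψ i) i hi ?_ ?_
  · intro h
    exact A.adj_ne Ψ i hi (smul_left_cancel g h)
  · rintro F hF hrk
    obtain ⟨G, hG, rfl⟩ := mem_smul_iff.mp hF
    rw [rank_smul A g G] at hrk
    exact smul_mem_flag (A.adj_mem Ψ i hi G hG hrk)

lemma flag_eq_of_subset {Ψ Λ : Flag Face} (h : ∀ F ∈ Ψ, F ∈ Λ) : Ψ = Λ :=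
  Flag.ext (Ψ.max_chain' Λ.chain_le (fun F hF => h F hF))

lemma flag_eq_of_faceAt (A : AbstractPolytope n Face) {Ψ Λ : Flag Face}
    (h : ∀ l : ℤ, -1 ≤ l → l ≤ n → A.faceAt Ψ l = A.faceAt Λ l) : Ψ = Λ := by
  apply flag_eq_of_subset
  intro F hF
  have h1 := A.faceAt_eq Ψ F hF
  rw [← h1, h _ (A.rank_le F).1 (A.rank_le F).2]
  exact A.faceAt_mem Λ _ (A.rank_le F).1 (A.rank_le F).2

lemma faceAt_adj (A : AbstractPolytope n Face) (Ψ : Flag Face) {i : ℕ} (hi : i < n)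
    {l : ℤ} (h1 : -1 ≤ l) (h2 : l ≤ n) (hne : l ≠ (i : ℤ)) :
    A.faceAt (A.adj Ψ i) l = A.faceAt Ψ l := by
  have hm : A.faceAt Ψ l ∈ A.adj Ψ i :=
    A.adj_mem Ψ i hi _ (A.faceAt_mem Ψ l h1 h2) (by rw [A.faceAt_rank Ψ l h1 h2]; exact hne)
  have h3 := A.faceAt_eq (A.adj Ψ i) _ hm
  rw [A.faceAt_rank Ψ l h1 h2] at h3
  exact h3

lemma adj_adj (A : AbstractPolytope n Face) (Ψ : Flag Face) {i : ℕ} (hi : i < n) :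
    A.adj (A.adj Ψ i) i = Ψ := by
  symm
  refine A.adj_unique _ _ i hi (Ne.symm (A.adj_ne Ψ i hi)) ?_
  intro F hF hrk
  have h1 := A.faceAt_eq _ F hF
  rw [← h1, faceAt_adj A Ψ hi (A.rank_le F).1 (A.rank_le F).2 hrk]
  exact A.faceAt_mem Ψ _ (A.rank_le F).1 (A.rank_le F).2

lemma faceAt_adj_ne (A : AbstractPolytope n Face) (Ψ : Flag Face) {i : ℕ} (hi : i < n) :
    A.faceAt (A.adj Ψ i) (i : ℤ) ≠ A.faceAt Ψ (i : ℤ) := by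
  intro h
  apply A.adj_ne Ψ i hi
  apply flag_eq_of_faceAt A
  intro l h1 h2
  by_cases hl : l = (i : ℤ)
  · rw [hl]; exact h
  · exact faceAt_adj A Ψ hi h1 h2 hl

lemma adj_dichotomy (A : AbstractPolytope n Face) {Ψ Λ : Flag Face} {i : ℕ} (hi : i < n)
    (h : ∀ F ∈ Ψ, A.rank F ≠ (i : ℤ) → F ∈ Λ) : Λ = Ψ ∨ Λ = A.adj Ψ i := by
  by_cases he : Λ = Ψ
  · exact Or.inl he
  · exact Or.inr (A.adj_unique Ψ Λ i hi he h)

lemma eq_one_of_fixes (A : AbstractPolytope n Face) (g : Face ≃o Face) (Φ₀ : Flag Face)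
    (h : g • Φ₀ = Φ₀) : g = 1 := by
  have hflag : ∀ Ψ : Flag Face, g • Ψ = Ψ := by
    intro Ψ
    obtain ⟨l, c, hc0, hcl, hstep⟩ := A.connected Φ₀ Ψ
    have key : ∀ m, m ≤ l → g • c m = c m := by
      intro m
      induction m with
      | zero => intro _; rw [hc0]; exact h
      | succ m ih =>
        intro hm
        obtain ⟨i, hi, hadj, -⟩ := hstep m (by omega)
        rw [hadj, smul_adj A g (c m) hi, ih (by omega)]
    rw [← hcl]; exact key l le_rfl
  have hfix : ∀ F, g F = F := by
    intro F
    obtain ⟨Ψ, hΨ⟩ := exists_mem_flag F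
    have h1 : g F ∈ Ψ := by
      have := smul_mem_flag (g := g) hΨ
      rwa [hflag Ψ] at this
    have h2 := A.faceAt_eq Ψ (g F) h1
    rw [rank_smul A g F, A.faceAt_eq Ψ F hΨ] at h2
    exact h2.symm
  exact OrderIso.ext (funext hfix)

lemma smul_flag_cancel (A : AbstractPolytope n Face) {g h : Face ≃o Face} {Ψ : Flag Face}
    (he : g • Ψ = h • Ψ) : g = h := by
  have h1 : (h⁻¹ * g) • Ψ = Ψ := by rw [mul_smul, he, inv_smul_smul]
  have h2 := eq_one_of_fixes A _ Ψ h1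
  have h3 : h * (h⁻¹ * g) = h * 1 := by rw [h2]
  rwa [mul_one, ← mul_assoc, mul_inv_cancel, one_mul] at h3


lemma surgery (A : AbstractPolytope n Face) (Ψ : Flag Face) {i : ℕ} (hi : i < n) {G : Face}
    (hrk : A.rank G = (i : ℤ)) (hne : G ≠ A.faceAt Ψ (i : ℤ))
    (hlo : A.faceAt Ψ ((i : ℤ) - 1) < G) (hup : G < A.faceAt Ψ ((i : ℤ) + 1)) :
    A.faceAt (A.adj Ψ i) (i : ℤ) = G := by
  have hin : (-1 : ℤ) ≤ (i : ℤ) ∧ (i : ℤ) ≤ (n : ℤ) := by constructor <;> omega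
  have hGnot : G ∉ Ψ := by
    intro h
    have := A.faceAt_eq Ψ G h
    rw [hrk] at this
    exact hne this.symm
  set S : Set Face := {F | F ∈ Ψ ∧ A.rank F ≠ (i : ℤ)} ∪ {G} with hS
  have hcompG : ∀ x, x ∈ Ψ → A.rank x ≠ (i : ℤ) → (x ≤ G ∨ G ≤ x) := by
    intro x hx hxr
    rcases lt_or_gt_of_ne hxr with h | h
    · left
      have h1 : x ≤ A.faceAt Ψ ((i : ℤ) - 1) :=
        le_of_rank_le A hx (A.faceAt_mem Ψ _ (by omega) (by omega))
          (by rw [A.faceAt_rank Ψ _ (by omega) (by omega)]; omega)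
      exact h1.trans hlo.le
    · right
      have h1 : A.faceAt Ψ ((i : ℤ) + 1) ≤ x :=
        le_of_rank_le A (A.faceAt_mem Ψ _ (by omega) (by omega)) hx
          (by rw [A.faceAt_rank Ψ _ (by omega) (by omega)]; have := (A.rank_le x).2; omega)
      exact hup.le.trans h1
  have hchain : IsChain (· ≤ ·) S := by
    rintro x hx y hy hxy
    rcases hx with ⟨hxΨ, hxr⟩ | hx
    · rcases hy with ⟨hyΨ, hyr⟩ | hy
      · exact Ψ.le_or_le hxΨ hyΨ
      · rw [Set.mem_singleton_iff] at hy; subst hy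
        exact hcompG x hxΨ hxr
    · rw [Set.mem_singleton_iff] at hx; subst hx
      rcases hy with ⟨hyΨ, hyr⟩ | hy
      · exact (hcompG y hyΨ hyr).symm
      · rw [Set.mem_singleton_iff] at hy; exact absurd hy.symm hxy
  have hmax : IsMaxChain (· ≤ ·) S := by
    refine ⟨hchain, ?_⟩
    intro t ht hst
    refine Set.Subset.antisymm hst ?_
    intro x hx
    by_cases hxS : x ∈ S
    · exact hxS
    exfalso
    have hcomp : ∀ y, y ∈ S → x ≤ y ∨ y ≤ x := by
      intro y hy
      rcases eq_or_ne x y with rfl | hne'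
      · exact Or.inl le_rfl
      · exact ht hx (hst hy) hne'
    rcases eq_or_ne (A.rank x) (i : ℤ) with hri | hri
    · have hG : G ∈ S := Set.mem_union_right _ rfl
      rcases hcomp G hG with h | h
      · rcases h.lt_or_eq with h' | h'
        · have := A.rank_strictMono h'; omega
        · exact hxS (h' ▸ hG)
      · rcases h.lt_or_eq with h' | h'
        · have := A.rank_strictMono h'; omega
        · exact hxS (h'.symm ▸ hG)
    · apply hxS
      have hxΨ : x ∈ Ψ := by
        rw [Flag.mem_iff_forall_le_or_ge]
        intro b hb
        rcases eq_or_ne (A.rank b) (i : ℤ) with hbi | hbi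
        · have hb' : b = A.faceAt Ψ (i : ℤ) := by
            rw [← A.faceAt_eq Ψ b hb, hbi]
          have hxb := (A.rank_le x).1
          have hxb2 := (A.rank_le x).2
          rcases lt_or_gt_of_ne hri with h | h
          · left
            have hm1 : A.faceAt Ψ ((i : ℤ) - 1) ∈ S := by
              refine Set.mem_union_left _ ⟨A.faceAt_mem Ψ _ (by omega) (by omega), ?_⟩
              rw [A.faceAt_rank Ψ _ (by omega) (by omega)]; omega
            have h1 : x ≤ A.faceAt Ψ ((i : ℤ) - 1) := by
              rcases hcomp _ hm1 with h2 | h2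
              · exact h2
              · rcases h2.lt_or_eq with h3 | h3
                · have := A.rank_strictMono h3
                  rw [A.faceAt_rank Ψ _ (by omega) (by omega)] at this
                  omega
                · exact h3.ge
            refine h1.trans ?_
            rw [hb']
            exact (faceAt_lt A Ψ (by omega) (by omega) (by omega)).le
          · right
            have hm1 : A.faceAt Ψ ((i : ℤ) + 1) ∈ S := by
              refine Set.mem_union_left _ ⟨A.faceAt_mem Ψ _ (by omega) (by omega), ?_⟩
              rw [A.faceAt_rank Ψ _ (by omega) (by omega)]; omega
            have h1 : A.faceAt Ψ ((i : ℤ) + 1) ≤ x := by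
              rcases hcomp _ hm1 with h2 | h2
              · rcases h2.lt_or_eq with h3 | h3
                · have := A.rank_strictMono h3
                  rw [A.faceAt_rank Ψ _ (by omega) (by omega)] at this
                  omega
                · exact h3.ge
              · exact h2
            refine le_trans ?_ h1
            rw [hb']
            exact (faceAt_lt A Ψ (by omega) (by omega) (by omega)).le
        · exact hcomp b (Set.mem_union_left _ ⟨hb, hbi⟩)
      exact Set.mem_union_left _ ⟨hxΨ, hri⟩
  have hGS : G ∈ S := Set.mem_union_right _ rfl
  set Λ : Flag Face := Flag.ofIsMaxChain S hmax with hΛdef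
  have hGΛ : G ∈ Λ := hGS
  have hΛ : Λ = A.adj Ψ i := by
    refine A.adj_unique Ψ Λ i hi ?_ ?_
    · intro h
      rw [h] at hGΛ
      exact hGnot hGΛ
    · intro F hF hrk'
      exact Set.mem_union_left _ ⟨hF, hrk'⟩
  rw [hΛ] at hGΛ
  have := A.faceAt_eq (A.adj Ψ i) G hGΛ
  rw [hrk] at this
  exact this

lemma adj_comm (A : AbstractPolytope n Face) (Ψ : Flag Face) {j k : ℕ}
    (hj : j < n) (hk : k < n) (hjk : j + 2 ≤ k) :
    A.adj (A.adj Ψ j) k = A.adj (A.adj Ψ k) j := by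
  apply flag_eq_of_faceAt A
  intro l h1 h2
  rcases eq_or_ne l (j : ℤ) with rfl | hlj
  · rw [faceAt_adj A (A.adj Ψ j) hk h1 h2 (by omega)]
    symm
    refine surgery A (A.adj Ψ k) hj ?_ ?_ ?_ ?_
    · exact A.faceAt_rank (A.adj Ψ j) _ h1 h2
    · rw [faceAt_adj A Ψ hk h1 h2 (by omega)]
      exact faceAt_adj_ne A Ψ hj
    · rw [faceAt_adj A Ψ hk (by omega) (by omega) (by omega),
        ← faceAt_adj A Ψ hj (l := (j : ℤ) - 1) (by omega) (by omega) (by omega)]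
      exact faceAt_lt A (A.adj Ψ j) (by omega) (by omega) (by omega)
    · rw [faceAt_adj A Ψ hk (by omega) (by omega) (by omega),
        ← faceAt_adj A Ψ hj (l := (j : ℤ) + 1) (by omega) (by omega) (by omega)]
      exact faceAt_lt A (A.adj Ψ j) (by omega) (by omega) (by omega)
  rcases eq_or_ne l (k : ℤ) with rfl | hlk
  · rw [faceAt_adj A (A.adj Ψ k) hj h1 h2 (by omega)]
    refine surgery A (A.adj Ψ j) hk ?_ ?_ ?_ ?_
    · exact A.faceAt_rank (A.adj Ψ k) _ h1 h2
    · rw [faceAt_adj A Ψ hj h1 h2 (by omega)]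
      exact faceAt_adj_ne A Ψ hk
    · rw [faceAt_adj A Ψ hj (by omega) (by omega) (by omega),
        ← faceAt_adj A Ψ hk (l := (k : ℤ) - 1) (by omega) (by omega) (by omega)]
      exact faceAt_lt A (A.adj Ψ k) (by omega) (by omega) (by omega)
    · rw [faceAt_adj A Ψ hj (by omega) (by omega) (by omega),
        ← faceAt_adj A Ψ hk (l := (k : ℤ) + 1) (by omega) (by omega) (by omega)]
      exact faceAt_lt A (A.adj Ψ k) (by omega) (by omega) (by omega)
  · rw [faceAt_adj A (A.adj Ψ j) hk h1 h2 hlk, faceAt_adj A Ψ hj h1 h2 hlj,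
      faceAt_adj A (A.adj Ψ k) hj h1 h2 hlj, faceAt_adj A Ψ hk h1 h2 hlk]

lemma sameOrbit_refl (Φ : Flag Face) : SameOrbit Φ Φ := ⟨1, one_smul _ _⟩

lemma sameOrbit_symm {Φ Ψ : Flag Face} : SameOrbit Φ Ψ → SameOrbit Ψ Φ :=
  fun ⟨g, h⟩ => ⟨g⁻¹, by rw [← h, inv_smul_smul]⟩

lemma sameOrbit_trans {Φ Ψ Λ : Flag Face} : SameOrbit Φ Ψ → SameOrbit Ψ Λ → SameOrbit Φ Λ :=
  fun ⟨g, hg⟩ ⟨h, hh⟩ => ⟨h * g, by rw [mul_smul, hg, hh]⟩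

lemma sameOrbit_adj (A : AbstractPolytope n Face) {i : ℕ} (hi : i < n) {Φ Ψ : Flag Face} :
    SameOrbit Φ Ψ → SameOrbit (A.adj Φ i) (A.adj Ψ i) :=
  fun ⟨g, hg⟩ => ⟨g, by rw [smul_adj A g Φ hi, hg]⟩

lemma not_sameOrbit_adj (A : AbstractPolytope n Face) (h2 : A.TwoOrbit) {i : ℕ} (hi : i < n)
    (Ψ₀ : Flag Face) (h₀ : ¬ SameOrbit Ψ₀ (A.adj Ψ₀ i)) :
    ∀ Λ : Flag Face, ¬ SameOrbit Λ (A.adj Λ i) := by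
  intro Λ hΛ
  by_cases hc : SameOrbit Λ Ψ₀
  · exact h₀ (sameOrbit_trans (sameOrbit_trans (sameOrbit_symm hc) hΛ) (sameOrbit_adj A hi hc))
  · obtain ⟨Φ₁, Φ₂, -, hcov⟩ := h2
    have hΛΨ : SameOrbit Λ (A.adj Ψ₀ i) := by
      rcases hcov Λ with h1 | h1 <;> rcases hcov Ψ₀ with h2' | h2' <;>
        rcases hcov (A.adj Ψ₀ i) with h3 | h3
      · exact absurd (sameOrbit_trans h1 (sameOrbit_symm h2')) hc
      · exact absurd (sameOrbit_trans h1 (sameOrbit_symm h2')) hc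
      · exact sameOrbit_trans h1 (sameOrbit_symm h3)
      · exact absurd (sameOrbit_trans h2' (sameOrbit_symm h3)) h₀
      · exact absurd (sameOrbit_trans h2' (sameOrbit_symm h3)) h₀
      · exact sameOrbit_trans h1 (sameOrbit_symm h3)
      · exact absurd (sameOrbit_trans h1 (sameOrbit_symm h2')) hc
      · exact absurd (sameOrbit_trans h1 (sameOrbit_symm h2')) hc
    have hfin : SameOrbit (A.adj Λ i) Ψ₀ := by
      have := sameOrbit_adj A hi hΛΨ
      rwa [adj_adj A Ψ₀ hi] at this
    exact hc (sameOrbit_trans hΛ hfin)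

end AbstractPolytope
open AbstractPolytope in
/-- For a two-orbit polytope with `N \ I = {j₀, j₀+2}`: the coset
intersection `Γ_{k₀}⁻ ∩ Γ_{j₀}⁺ α_{j₀,k₀}` is empty, and
`Γ_{k₀}⁻ ∩ α_{k₀,j₀} Γ_{j₀}⁺ α_{j₀,k₀} = ⟨α_{j₀,j₀+1,j₀}⟩`, a group of order 2.
(An element of the paper's product "`x` then `y`" is the composition `y * x` here.) -/
theorem stmt18 {n : ℕ} {Face : Type*} [PartialOrder Face] (A : AbstractPolytope n Face)
    (I : Set ℕ) (h2 : A.TwoOrbit) (hI : A.InClass I)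
    (Φ : Flag Face)
    (ρ : ℕ → (Face ≃o Face)) (α : ℕ → ℕ → (Face ≃o Face)) (β : ℕ → ℕ → (Face ≃o Face))
    (hρ : ∀ i ∈ I, (ρ i) • Φ = A.adj Φ i)
    (hα : ∀ j k : ℕ, j < n → k < n → j ∉ I → k ∉ I →
        (α j k) • Φ = A.adj (A.adj Φ j) k)
    (hβ : ∀ j : ℕ, ∀ i ∈ I, j < n → j ∉ I →
        (β j i) • Φ = A.adj (A.adj (A.adj Φ j) i) j)
    (j₀ : ℕ) (hk₀n : j₀ + 2 < n)
    (hcompl : ∀ k : ℕ, k < n → (k ∉ I ↔ (k = j₀ ∨ k = j₀ + 2))) :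
    ∀ Gkm Gjp : Subgroup (Face ≃o Face),
      Gkm = Subgroup.closure
        ({x : Face ≃o Face | ∃ i ∈ I, i < j₀ + 2 ∧ x = ρ i}
          ∪ {x : Face ≃o Face | ∃ j k : ℕ, j ∉ I ∧ k ∉ I ∧ j < j₀ + 2 ∧ k < j₀ + 2 ∧
              x = α j k}
          ∪ {x : Face ≃o Face | ∃ j : ℕ, ∃ i ∈ I, j ∉ I ∧ j < j₀ + 2 ∧ i < j₀ + 2 ∧
              x = β j i}) →
      Gjp = Subgroup.closure
        ({x : Face ≃o Face | ∃ i ∈ I, j₀ < i ∧ x = ρ i}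
          ∪ {x : Face ≃o Face | ∃ j k : ℕ, j < n ∧ k < n ∧ j ∉ I ∧ k ∉ I ∧
              j₀ < j ∧ j₀ < k ∧ x = α j k}
          ∪ {x : Face ≃o Face | ∃ j : ℕ, ∃ i ∈ I, j < n ∧ j ∉ I ∧ j₀ < j ∧ j₀ < i ∧
              x = β j i}) →
      ({x : Face ≃o Face | x ∈ Gkm ∧ ∃ g ∈ Gjp, x = α j₀ (j₀ + 2) * g} = ∅)
      ∧ ({x : Face ≃o Face | x ∈ Gkm ∧
            ∃ g ∈ Gjp, x = α j₀ (j₀ + 2) * g * α (j₀ + 2) j₀}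
          = {1, β j₀ (j₀ + 1)})
      ∧ β j₀ (j₀ + 1) ≠ 1 := by
  intro Gkm Gjp hGkm hGjp
  have hj₀n : j₀ < n := by omega
  have hj1n : j₀ + 1 < n := by omega
  have hj₀I : j₀ ∉ I := (hcompl j₀ hj₀n).mpr (Or.inl rfl)
  have hk₀I : j₀ + 2 ∉ I := (hcompl _ hk₀n).mpr (Or.inr rfl)
  have hj1I : j₀ + 1 ∈ I := by
    by_contra h
    rcases (hcompl _ hj1n).mp h with h' | h' <;> omega
  have hGkmfix : ∀ x ∈ Gkm, ∀ l : ℤ, (j₀ : ℤ) + 2 ≤ l → l ≤ (n : ℤ) →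
      x (A.faceAt Φ l) = A.faceAt Φ l := by
    intro x hx l hl1 hl2
    have hl0 : (-1 : ℤ) ≤ l := by omega
    have hsub : Gkm ≤ A.faceStab (A.faceAt Φ l) := by
      rw [hGkm]
      refine (Subgroup.closure_le _).mpr ?_
      rintro g ((⟨i, hiI, hik, rfl⟩ | ⟨j, k, hjI, hkI, hjk, hkk, rfl⟩) |
        ⟨j, i, hiI, hjI, hjk, hik, rfl⟩)
      · show ρ i (A.faceAt Φ l) = A.faceAt Φ l
        have h1 := (smul_faceAt A (ρ i) Φ hl0 hl2).1
        rw [hρ i hiI, faceAt_adj A Φ (hI.1 i hiI) hl0 hl2 (by omega)] at h1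
        exact h1
      · show α j k (A.faceAt Φ l) = A.faceAt Φ l
        have h1 := (smul_faceAt A (α j k) Φ hl0 hl2).1
        rw [hα j k (by omega) (by omega) hjI hkI,
          faceAt_adj A _ (show k < n by omega) hl0 hl2 (by omega),
          faceAt_adj A Φ (show j < n by omega) hl0 hl2 (by omega)] at h1
        exact h1
      · show β j i (A.faceAt Φ l) = A.faceAt Φ l
        have hin : i < n := hI.1 i hiI
        have h1 := (smul_faceAt A (β j i) Φ hl0 hl2).1
        rw [hβ j i hiI (by omega) hjI,
          faceAt_adj A _ (show j < n by omega) hl0 hl2 (by omega),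
          faceAt_adj A _ hin hl0 hl2 (by omega),
          faceAt_adj A Φ (show j < n by omega) hl0 hl2 (by omega)] at h1
        exact h1
    exact hsub hx
  have hGjpfix : ∀ x ∈ Gjp, ∀ l : ℤ, -1 ≤ l → l ≤ (j₀ : ℤ) →
      x (A.faceAt Φ l) = A.faceAt Φ l := by
    intro x hx l hl1 hl2
    have hl2' : l ≤ (n : ℤ) := by omega
    have hsub : Gjp ≤ A.faceStab (A.faceAt Φ l) := by
      rw [hGjp]
      refine (Subgroup.closure_le _).mpr ?_
      rintro g ((⟨i, hiI, hij, rfl⟩ | ⟨j, k, hjn, hkn, hjI, hkI, hjj, hkj, rfl⟩) |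
        ⟨j, i, hiI, hjn, hjI, hjj, hij, rfl⟩)
      · show ρ i (A.faceAt Φ l) = A.faceAt Φ l
        have h1 := (smul_faceAt A (ρ i) Φ hl1 hl2').1
        rw [hρ i hiI, faceAt_adj A Φ (hI.1 i hiI) hl1 hl2' (by omega)] at h1
        exact h1
      · show α j k (A.faceAt Φ l) = A.faceAt Φ l
        have h1 := (smul_faceAt A (α j k) Φ hl1 hl2').1
        rw [hα j k hjn hkn hjI hkI,
          faceAt_adj A _ hkn hl1 hl2' (by omega),
          faceAt_adj A Φ hjn hl1 hl2' (by omega)] at h1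
        exact h1
      · show β j i (A.faceAt Φ l) = A.faceAt Φ l
        have hin : i < n := hI.1 i hiI
        have h1 := (smul_faceAt A (β j i) Φ hl1 hl2').1
        rw [hβ j i hiI hjn hjI,
          faceAt_adj A _ hjn hl1 hl2' (by omega),
          faceAt_adj A _ hin hl1 hl2' (by omega),
          faceAt_adj A Φ hjn hl1 hl2' (by omega)] at h1
        exact h1
    exact hsub hx
  have hα₀ : α j₀ (j₀ + 2) • Φ = A.adj (A.adj Φ j₀) (j₀ + 2) := hα _ _ hj₀n hk₀n hj₀I hk₀I
  have hα₁ : α (j₀ + 2) j₀ • Φ = A.adj (A.adj Φ (j₀ + 2)) j₀ := hα _ _ hk₀n hj₀n hk₀I hj₀I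
  have hα₀₁ : α (j₀ + 2) j₀ = α j₀ (j₀ + 2) := by
    refine smul_flag_cancel A (Ψ := Φ) ?_
    rw [hα₀, hα₁, adj_comm A Φ hj₀n hk₀n le_rfl]
  have hα₀inv : α j₀ (j₀ + 2) * α j₀ (j₀ + 2) = 1 := by
    refine eq_one_of_fixes A _ Φ ?_
    rw [mul_smul, hα₀, smul_adj A _ _ hk₀n, smul_adj A _ _ hj₀n, hα₀,
      ← adj_comm A (A.adj Φ j₀) hj₀n hk₀n le_rfl, adj_adj A Φ hj₀n, adj_adj A Φ hk₀n]
  have hβ₀ : β j₀ (j₀ + 1) • Φ = A.adj (A.adj (A.adj Φ j₀) (j₀ + 1)) j₀ :=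
    hβ j₀ (j₀ + 1) hj1I hj₀n hj₀I
  have hβ₀ne : β j₀ (j₀ + 1) ≠ 1 := by
    intro h
    have h2' : β j₀ (j₀ + 1) • Φ = Φ := by rw [h, one_smul]
    rw [hβ₀] at h2'
    have h3 := congrArg (fun Ψ => A.adj Ψ j₀) h2'
    rw [adj_adj A _ hj₀n] at h3
    exact A.adj_ne (A.adj Φ j₀) (j₀ + 1) hj1n h3
  have hβk : β (j₀ + 2) (j₀ + 1) • Φ = A.adj (A.adj (A.adj Φ (j₀ + 2)) (j₀ + 1)) (j₀ + 2) :=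
    hβ _ _ hj1I hk₀n hk₀I
  have hrel : β j₀ (j₀ + 1) = α j₀ (j₀ + 2) * β (j₀ + 2) (j₀ + 1) * α (j₀ + 2) j₀ := by
    refine smul_flag_cancel A (Ψ := Φ) ?_
    rw [hβ₀, mul_smul, mul_smul, hα₁, smul_adj A _ _ hj₀n, smul_adj A _ _ hk₀n, hβk,
      adj_adj A _ hk₀n, smul_adj A _ _ hj₀n, smul_adj A _ _ hj1n, smul_adj A _ _ hk₀n,
      hα₀, adj_adj A _ hk₀n]
  have hbj : (-1 : ℤ) ≤ (j₀ : ℤ) := by omega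
  have hbj2 : (j₀ : ℤ) ≤ (n : ℤ) := by omega
  have hG₀ : α j₀ (j₀ + 2) (A.faceAt Φ (j₀ : ℤ)) = A.faceAt (A.adj Φ j₀) (j₀ : ℤ) := by
    have h1 := (smul_faceAt A (α j₀ (j₀ + 2)) Φ hbj hbj2).1
    rw [hα₀, faceAt_adj A (A.adj Φ j₀) hk₀n hbj hbj2 (by omega)] at h1
    exact h1
  have hα₀fix : ∀ l : ℤ, -1 ≤ l → l ≤ (n : ℤ) → l ≠ (j₀ : ℤ) → l ≠ (j₀ : ℤ) + 2 →
      α j₀ (j₀ + 2) (A.faceAt Φ l) = A.faceAt Φ l := by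
    intro l h1 h2' h3 h4
    have h5 := (smul_faceAt A (α j₀ (j₀ + 2)) Φ h1 h2').1
    rw [hα₀, faceAt_adj A _ hk₀n h1 h2' (by omega), faceAt_adj A Φ hj₀n h1 h2' h3] at h5
    exact h5
  have hnoj₀ : ∀ Λ : Flag Face, ¬ SameOrbit Λ (A.adj Λ j₀) := by
    have h' : ¬ ∀ Ψ : Flag Face, SameOrbit Ψ (A.adj Ψ j₀) := fun h => hj₀I ((hI.2 j₀ hj₀n).mpr h)
    push_neg at h'
    obtain ⟨Ψ₀, h₀⟩ := h'
    exact not_sameOrbit_adj A h2 hj₀n Ψ₀ h₀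
  have hyesj1 : ∀ Λ : Flag Face, SameOrbit Λ (A.adj Λ (j₀ + 1)) :=
    (hI.2 (j₀ + 1) hj1n).mp hj1I
  refine ⟨?_, ?_, hβ₀ne⟩
  · rw [Set.eq_empty_iff_forall_notMem]
    rintro x ⟨hxGkm, g, hgGjp, rfl⟩
    have hface : ∀ F ∈ A.adj Φ j₀, A.rank F ≠ ((j₀ + 1 : ℕ) : ℤ) →
        F ∈ (α j₀ (j₀ + 2) * g) • Φ := by
      intro F hF hrk
      have hl1 : (-1 : ℤ) ≤ A.rank F := (A.rank_le F).1
      have hl2 : A.rank F ≤ (n : ℤ) := (A.rank_le F).2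
      have hrk' : A.rank F ≠ (j₀ : ℤ) + 1 := by push_cast at hrk; exact hrk
      have hFeq : A.faceAt (A.adj Φ j₀) (A.rank F) = F := A.faceAt_eq _ F hF
      rcases eq_or_ne (A.rank F) (j₀ : ℤ) with hlj | hlj
      · have hx : (α j₀ (j₀ + 2) * g) (A.faceAt Φ (j₀ : ℤ)) = F := by
          rw [RelIso.mul_apply, hGjpfix g hgGjp (j₀ : ℤ) hbj le_rfl, hG₀, ← hlj, hFeq]
        rw [← hx]
        exact smul_mem_flag (A.faceAt_mem Φ _ hbj hbj2)
      · have hFeq2 : A.faceAt Φ (A.rank F) = F := by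
          rw [← faceAt_adj A Φ hj₀n hl1 hl2 hlj, hFeq]
        have hxF : (α j₀ (j₀ + 2) * g) (A.faceAt Φ (A.rank F)) = A.faceAt Φ (A.rank F) := by
          rcases le_or_gt (A.rank F) (j₀ : ℤ) with hc | hc
          · rw [RelIso.mul_apply, hGjpfix g hgGjp _ hl1 hc,
              hα₀fix _ hl1 hl2 hlj (by omega)]
          · exact hGkmfix _ hxGkm _ (by omega) hl2
        rw [← hFeq2, ← hxF]
        exact smul_mem_flag (A.faceAt_mem Φ _ hl1 hl2)
    rcases adj_dichotomy A hj1n hface with h | h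
    · exact hnoj₀ Φ ⟨_, h⟩
    · have ho1 : SameOrbit Φ (A.adj (A.adj Φ j₀) (j₀ + 1)) := ⟨_, h⟩
      exact hnoj₀ Φ (sameOrbit_trans ho1 (sameOrbit_symm (hyesj1 (A.adj Φ j₀))))
  · ext x
    simp only [Set.mem_setOf_eq, Set.mem_insert_iff, Set.mem_singleton_iff]
    constructor
    · rintro ⟨hxGkm, g, hgGjp, rfl⟩
      have hxα : (α j₀ (j₀ + 2) * g * α (j₀ + 2) j₀) * α j₀ (j₀ + 2) = α j₀ (j₀ + 2) * g := by
        rw [hα₀₁, mul_assoc (α j₀ (j₀ + 2) * g), hα₀inv, mul_one]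
      have hxfix : ∀ l : ℤ, -1 ≤ l → l ≤ (n : ℤ) → l ≠ (j₀ : ℤ) → l ≠ (j₀ : ℤ) + 1 →
          (α j₀ (j₀ + 2) * g * α (j₀ + 2) j₀) (A.faceAt Φ l) = A.faceAt Φ l := by
        intro l h1 h2' h3 h4
        rcases le_or_gt l (j₀ : ℤ) with hc | hc
        · have e1 : (α j₀ (j₀ + 2) * g * α (j₀ + 2) j₀) (α j₀ (j₀ + 2) (A.faceAt Φ l))
              = (α j₀ (j₀ + 2) * g) (A.faceAt Φ l) := by
            rw [← RelIso.mul_apply, hxα]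
          rw [hα₀fix l h1 h2' h3 (by omega)] at e1
          rw [e1, RelIso.mul_apply, hGjpfix g hgGjp l h1 hc, hα₀fix l h1 h2' h3 (by omega)]
        · exact hGkmfix _ hxGkm l (by omega) h2'
      have hxG₀ : (α j₀ (j₀ + 2) * g * α (j₀ + 2) j₀) (A.faceAt (A.adj Φ j₀) (j₀ : ℤ))
          = A.faceAt (A.adj Φ j₀) (j₀ : ℤ) := by
        rw [← hG₀, ← RelIso.mul_apply, hxα, RelIso.mul_apply,
          hGjpfix g hgGjp (j₀ : ℤ) hbj le_rfl, hG₀]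
      have hface : ∀ F ∈ A.adj Φ j₀, A.rank F ≠ ((j₀ + 1 : ℕ) : ℤ) →
          F ∈ (α j₀ (j₀ + 2) * g * α (j₀ + 2) j₀) • (A.adj Φ j₀) := by
        intro F hF hrk
        have hl1 : (-1 : ℤ) ≤ A.rank F := (A.rank_le F).1
        have hl2 : A.rank F ≤ (n : ℤ) := (A.rank_le F).2
        have hrk' : A.rank F ≠ (j₀ : ℤ) + 1 := by push_cast at hrk; exact hrk
        have hFeq : A.faceAt (A.adj Φ j₀) (A.rank F) = F := A.faceAt_eq _ F hF
        rcases eq_or_ne (A.rank F) (j₀ : ℤ) with hlj | hlj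
        · rw [← hFeq, hlj, ← hxG₀]
          exact smul_mem_flag (A.faceAt_mem (A.adj Φ j₀) _ hbj hbj2)
        · have hFmem : A.faceAt Φ (A.rank F) ∈ A.adj Φ j₀ := by
            rw [← faceAt_adj A Φ hj₀n hl1 hl2 hlj]
            exact A.faceAt_mem (A.adj Φ j₀) _ hl1 hl2
          have hFeq2 : A.faceAt Φ (A.rank F) = F := by
            rw [← faceAt_adj A Φ hj₀n hl1 hl2 hlj, hFeq]
          rw [← hFeq2, ← hxfix _ hl1 hl2 hlj hrk']
          exact smul_mem_flag hFmem
      rcases adj_dichotomy A hj1n hface with h | h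
      · left
        refine eq_one_of_fixes A _ Φ ?_
        have h4 := smul_adj A (α j₀ (j₀ + 2) * g * α (j₀ + 2) j₀) (A.adj Φ j₀) hj₀n
        rw [adj_adj A Φ hj₀n] at h4
        rw [h4, h, adj_adj A Φ hj₀n]
      · right
        refine smul_flag_cancel A (Ψ := Φ) ?_
        rw [hβ₀]
        have h4 := smul_adj A (α j₀ (j₀ + 2) * g * α (j₀ + 2) j₀) (A.adj Φ j₀) hj₀n
        rw [adj_adj A Φ hj₀n] at h4
        rw [h4, h]
    · rintro (rfl | rfl)
      · exact ⟨one_mem _, 1, one_mem _, by rw [mul_one, hα₀₁, hα₀inv]⟩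
      · refine ⟨?_, β (j₀ + 2) (j₀ + 1), ?_, hrel⟩
        · rw [hGkm]
          exact Subgroup.subset_closure
            (Or.inr ⟨j₀, j₀ + 1, hj1I, hj₀I, by omega, by omega, rfl⟩)
        · rw [hGjp]
          exact Subgroup.subset_closure
            (Or.inr ⟨j₀ + 2, j₀ + 1, hj1I, hk₀n, hk₀I, by omega, by omega, rfl⟩)
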